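/- Correctness of AccMut (Theorem 1, AccMut versus standard mutation analysis): for every fuel bound n, every finite set I ⊆ M, every mutant ID i ∈ I, and every state s, accRun n I s i = stdRun n i s; in particular, for every mutant i ∈ M, the final state recorded by AccMut for i after n steps starting from the initial state equals the state reached by the standard mutation analysis of mutant i after n steps, so both produce the same sequence of save(s, i) invocations. -/

import Mathlib

/-- A variant at a location: a code block together with the set of mutant IDs
for which this variant is enabled. -/
structure Variant (C ID : Type) where
  code : C
  I : Finset ID
deriving DecidableEq

/-- A mutation model: a finite set `M` of all mutant IDs and a mutation procedure `p`
assigning to each location a finite set of variants, such that ID sets of distinct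
variants at a location are pairwise disjoint and their union is `M`. -/
structure MutModel (L C ID : Type) [DecidableEq C] [DecidableEq ID] where
  M : Finset ID
  p : L → Finset (Variant C ID)
  subset_M : ∀ l : L, ∀ v ∈ p l, v.I ⊆ M
  disj : ∀ l : L, ∀ v ∈ p l, ∀ w ∈ p l, v ≠ w → Disjoint v.I w.I
  cover : ∀ l : L, (p l).biUnion (fun v => v.I) = M

section Runs

variable {L C ID S : Type} [DecidableEq C] [DecidableEq ID] [DecidableEq S]

/-- The standard step of mutant `i` at state `s`: if `φ s = some l`, execute the
code of the unique variant in `p l` enabled for `i`; at a terminated state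
(`φ s = none`) the state is left unchanged. -/
noncomputable def step (m : MutModel L C ID) (φ : S → Option L) (execute : S → C → S)
    (i : ID) (s : S) : S :=
  match φ s with
  | none => s
  | some l => if h : ∃ v ∈ m.p l, i ∈ v.I then execute s h.choose.code else s

/-- The standard mutation-analysis run of mutant `i` for `n` steps. -/
noncomputable def stdRun (m : MutModel L C ID) (φ : S → Option L) (execute : S → C → S) :
    ℕ → ID → S → S
  | 0, _, s => s
  | n + 1, i, s =>
    match φ s with
    | none => s
    | some _ => stdRun m φ execute n i (step m φ execute i s)

/-- The AccMut run: a process representing the mutant IDs `I` advances, for the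
mutant `i`, by clustering `I` into the equivalence class
`K = {j ∈ I : step j s = step i s}` of `i` modulo the state `s` and applying the
change of an arbitrary representative `rep K` of the class. -/
noncomputable def accRun (m : MutModel L C ID) (φ : S → Option L) (execute : S → C → S)
    (rep : Finset ID → ID) : ℕ → Finset ID → S → ID → S
  | 0, _, s, _ => s
  | n + 1, I, s, i =>
    match φ s with
    | none => s
    | some _ =>
      accRun m φ execute rep n
        (I.filter fun j => step m φ execute j s = step m φ execute i s)
        (step m φ execute
          (rep (I.filter fun j => step m φ execute j s = step m φ execute i s)) s) i

end Runs

section Correctness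

variable {L C ID S : Type} [DecidableEq C] [DecidableEq ID]
  (m : MutModel L C ID) (φ : S → Option L) (execute : S → C → S)

theorem stdRun_succ_of_eq_none {s : S} (hs : φ s = none) (n : ℕ) (i : ID) :
    stdRun m φ execute (n + 1) i s = s := by
  simp only [stdRun, hs]

theorem stdRun_succ_of_eq_some {s : S} {l : L} (hs : φ s = some l) (n : ℕ) (i : ID) :
    stdRun m φ execute (n + 1) i s = stdRun m φ execute n i (step m φ execute i s) := by
  simp only [stdRun, hs]

variable [DecidableEq S]

noncomputable def stepClass (I : Finset ID) (s : S) (i : ID) : Finset ID :=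
  I.filter fun j => step m φ execute j s = step m φ execute i s

theorem mem_stepClass {I : Finset ID} {s : S} {i : ID} (hi : i ∈ I) :
    i ∈ stepClass m φ execute I s i :=
  Finset.mem_filter.mpr ⟨hi, rfl⟩

theorem step_eq_of_mem_stepClass {I : Finset ID} {s : S} {i j : ID}
    (hj : j ∈ stepClass m φ execute I s i) : step m φ execute j s = step m φ execute i s :=
  (Finset.mem_filter.mp hj).2

theorem accRun_succ_of_eq_none (rep : Finset ID → ID) {s : S} (hs : φ s = none)
    (n : ℕ) (I : Finset ID) (i : ID) :
    accRun m φ execute rep (n + 1) I s i = s := by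
  simp only [accRun, hs]

theorem accRun_succ_of_eq_some (rep : Finset ID → ID) {s : S} {l : L} (hs : φ s = some l)
    (n : ℕ) (I : Finset ID) (i : ID) :
    accRun m φ execute rep (n + 1) I s i =
      accRun m φ execute rep n (stepClass m φ execute I s i)
        (step m φ execute (rep (stepClass m φ execute I s i)) s) i := by
  simp only [accRun, hs, stepClass]

/-- Whichever representative of the class of `i` is chosen, it makes the same step as `i`,
so the process following that class stays on the standard run of `i`. -/
theorem accRun_eq_stdRun (rep : Finset ID → ID) (hrep : ∀ K : Finset ID, K.Nonempty → rep K ∈ K) :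
    ∀ (n : ℕ) (I : Finset ID) (i : ID), i ∈ I → ∀ s : S,
      accRun m φ execute rep n I s i = stdRun m φ execute n i s
  | 0, _, _, _, _ => rfl
  | n + 1, I, i, hi, s => by
    cases hs : φ s with
    | none =>
      rw [accRun_succ_of_eq_none m φ execute rep hs, stdRun_succ_of_eq_none m φ execute hs]
    | some l =>
      have hiK : i ∈ stepClass m φ execute I s i := mem_stepClass m φ execute hi
      rw [accRun_succ_of_eq_some m φ execute rep hs, stdRun_succ_of_eq_some m φ execute hs,
        step_eq_of_mem_stepClass m φ execute (hrep _ ⟨i, hiK⟩)]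
      exact accRun_eq_stdRun rep hrep n _ i hiK _

end Correctness

section Runs

variable {L C ID S : Type} [DecidableEq C] [DecidableEq ID] [DecidableEq S]

/-- Correctness of AccMut versus standard mutation analysis (Theorem 1): for every
fuel bound `n`, every `I ⊆ M`, every `i ∈ I` and every state `s`, the AccMut run
records for `i` exactly the state reached by the standard run of mutant `i`. -/
theorem stmt7 (m : MutModel L C ID) (φ : S → Option L) (execute : S → C → S)
    (rep : Finset ID → ID) (hrep : ∀ K : Finset ID, K.Nonempty → rep K ∈ K) :
    ∀ (n : ℕ) (I : Finset ID), I ⊆ m.M → ∀ i ∈ I, ∀ s : S,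
      accRun m φ execute rep n I s i = stdRun m φ execute n i s :=
  fun n I _ i hi s => accRun_eq_stdRun m φ execute rep hrep n I i hi s

end Runs
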